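/- The function φ(z) = (−z)^{−1−α} · P_n(1/z; α, β) satisfies the generalized eigenvalue equation L₁ φ = (−n−1−α−β) L₂ φ, where L₁ = z(1−z)∂_z² + (1−β−(2+α)z)∂_z and L₂ = (1−z)∂_z − (α+1)I. -/

import Mathlib

open Finset

noncomputable def poch (a : ℝ) (k : ℕ) : ℝ := ∏ i ∈ Finset.range k, (a + i)

noncomputable def HR (n : ℕ) (α β : ℝ) (z : ℝ) : ℝ :=
  (poch β n / poch (α + 1) n) *
    ∑ k ∈ Finset.range (n + 1),
      (poch (-(n : ℝ)) k * poch (α + 1) k) / ((k.factorial : ℝ) * poch (1 - β - (n : ℝ)) k) * z ^ k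

/-!
On `z < 0` the function `φ(z) = (-z)^(-1-α) P_n(1/z)` is a finite sum `∑ aₖ (-z)^(-1-α-k)`.
With `w = -z`, the operator `L₁ - λ L₂` (`λ = -n-1-α-β`) sends the monomial `w^(-1-α-k)` to
`(1+α+k)(n-k) w^(-2-α-k) + k(n+β-k) w^(-1-α-k)`, so on the sum it produces a telescoping
series `∑ (uₖ - uₖ₊₁)` with `uₖ = aₖ k (n+β-k) w^(-1-α-k)`, thanks to the two-term recurrence
`aₖ₊₁ (k+1)(n+β-k-1) = -aₖ (1+α+k)(n-k)` of the coefficients of `P_n`. Both ends vanish: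
`u₀` carries the factor `k = 0`, and `uₙ₊₁ = 0` by the recurrence at `k = n`.
-/

lemma poch_succ (a : ℝ) (k : ℕ) : poch a (k + 1) = poch a k * (a + k) := by
  simp [poch, Finset.prod_range_succ]

lemma poch_ne_zero {a : ℝ} {k : ℕ} (h : ∀ j < k, a + (j : ℝ) ≠ 0) : poch a k ≠ 0 :=
  Finset.prod_ne_zero_iff.mpr fun j hj => h j (Finset.mem_range.mp hj)

lemma poch_neg_natCast_of_lt {n k : ℕ} (h : n < k) : poch (-(n : ℝ)) k = 0 :=
  Finset.prod_eq_zero (Finset.mem_range.mpr h) (by simp)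

lemma hasDerivAt_neg_rpow (q : ℝ) {t : ℝ} (ht : t < 0) :
    HasDerivAt (fun x : ℝ => (-x) ^ q) (-(q * (-t) ^ (q - 1))) t := by
  simpa [mul_comm, Function.comp_def] using
    ((Real.hasDerivAt_rpow_const (p := q) (Or.inl (neg_ne_zero.mpr ht.ne))).comp t
      (hasDerivAt_neg t))

section NegRpowSum

variable {ι : Type*} (s : Finset ι) (a p : ι → ℝ)

noncomputable def negRpowSum (t : ℝ) : ℝ := ∑ i ∈ s, a i * (-t) ^ p i

lemma hasDerivAt_negRpowSum {t : ℝ} (ht : t < 0) :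
    HasDerivAt (negRpowSum s a p)
      (negRpowSum s (fun i => a i * -p i) (fun i => p i - 1) t) t := by
  refine (HasDerivAt.fun_sum (u := s) fun i _ =>
    (hasDerivAt_neg_rpow (p i) ht).const_mul (a i)).congr_deriv ?_
  exact Finset.sum_congr rfl fun i _ => by ring

lemma deriv_negRpowSum {t : ℝ} (ht : t < 0) :
    deriv (negRpowSum s a p) t = negRpowSum s (fun i => a i * -p i) (fun i => p i - 1) t :=
  (hasDerivAt_negRpowSum s a p ht).deriv

lemma deriv_deriv_negRpowSum {t : ℝ} (ht : t < 0) :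
    deriv (deriv (negRpowSum s a p)) t =
      negRpowSum s (fun i => a i * -p i * -(p i - 1)) (fun i => p i - 1 - 1) t := by
  have h : deriv (negRpowSum s a p) =ᶠ[nhds t]
      negRpowSum s (fun i => a i * -p i) (fun i => p i - 1) :=
    Filter.eventuallyEq_of_mem (Iio_mem_nhds ht) fun u hu => deriv_negRpowSum s a p hu
  rw [h.deriv_eq, deriv_negRpowSum _ _ _ ht]

end NegRpowSum

/-- `L₁ - μ L₂` applied to the monomial `(-z)^p`. -/
lemma quasiEigen_neg_rpow (α β μ p : ℝ) {z : ℝ} (hz : z < 0) :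
    z * (1 - z) * (-p * -(p - 1) * (-z) ^ (p - 1 - 1))
        + (1 - β - (2 + α) * z) * (-p * (-z) ^ (p - 1))
        - μ * ((1 - z) * (-p * (-z) ^ (p - 1)) - (α + 1) * (-z) ^ p)
      = -p * (p - β - μ) * (-z) ^ (p - 1) - (p + 1 + α) * (p - μ) * (-z) ^ p := by
  have hw : -z ≠ 0 := neg_ne_zero.mpr hz.ne
  have e1 : (-z) ^ (p - 1) = (-z) ^ (p - 1 - 1) * (-z) := by
    rw [← Real.rpow_add_one hw]; ring_nf
  have e2 : (-z) ^ p = (-z) ^ (p - 1) * (-z) := by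
    rw [← Real.rpow_add_one hw]; ring_nf
  rw [e2, e1]
  ring

lemma quasiEigen_of_eqOn_negRpowSum (n : ℕ) (α β : ℝ) (a : ℕ → ℝ)
    (hrec : ∀ k : ℕ, a (k + 1) * (k + 1) * (n + β - (k + 1)) = -(a k * (1 + α + k) * (n - k)))
    {f : ℝ → ℝ} (hf : ∀ t < 0, f t = negRpowSum (range (n + 1)) a (fun k => -1 - α - k) t)
    {z : ℝ} (hz : z < 0) :
    z * (1 - z) * deriv (deriv f) z + (1 - β - (2 + α) * z) * deriv f z
      = (-(n : ℝ) - 1 - α - β) * ((1 - z) * deriv f z - (α + 1) * f z) := by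
  have hfF : f =ᶠ[nhds z] negRpowSum (range (n + 1)) a (fun k => -1 - α - k) :=
    Filter.eventuallyEq_of_mem (Iio_mem_nhds hz) hf
  rw [hfF.deriv.deriv_eq, hfF.deriv_eq, hfF.eq_of_nhds, deriv_deriv_negRpowSum _ _ _ hz,
    deriv_negRpowSum _ _ _ hz, ← sub_eq_zero]
  set u : ℕ → ℝ := fun k => a k * k * (n + β - k) * (-z) ^ (-1 - α - k)
  have hterm : ∀ k : ℕ,
      z * (1 - z) * (a k * -(-1 - α - k) * -(-1 - α - k - 1) * (-z) ^ (-1 - α - k - 1 - 1))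
        + (1 - β - (2 + α) * z) * (a k * -(-1 - α - k) * (-z) ^ (-1 - α - k - 1))
        - (-(n : ℝ) - 1 - α - β) * ((1 - z) * (a k * -(-1 - α - k) * (-z) ^ (-1 - α - k - 1))
          - (α + 1) * (a k * (-z) ^ (-1 - α - k)))
      = u k - u (k + 1) := by
    intro k
    have hexp : (-1 - α - ((k + 1 : ℕ) : ℝ)) = -1 - α - k - 1 := by push_cast; ring
    simp only [u, hexp]
    push_cast
    linear_combination a k * quasiEigen_neg_rpow α β (-(n : ℝ) - 1 - α - β) (-1 - α - k) hz
      + (-z) ^ (-1 - α - k - 1) * hrec k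
  have hun : u (n + 1) = 0 := by
    have := hrec n
    simp only [u]
    push_cast
    linear_combination (-z) ^ (-1 - α - ((n : ℝ) + 1)) * this
  simp only [negRpowSum, mul_sum, ← sum_sub_distrib, ← sum_add_distrib]
  rw [sum_congr rfl fun k _ => hterm k, sum_range_sub' u (n + 1), hun]
  simp [u]

noncomputable def hrCoeff (n : ℕ) (α β : ℝ) (k : ℕ) : ℝ :=
  poch β n / poch (α + 1) n *
    ((-1) ^ k * (poch (-(n : ℝ)) k * poch (α + 1) k) / (k.factorial * poch (1 - β - n) k))

lemma rpow_mul_HR_one_div_eq_negRpowSum (n : ℕ) (α β : ℝ) {t : ℝ} (ht : t < 0) :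
    (-t) ^ (-1 - α) * HR n α β (1 / t)
      = negRpowSum (range (n + 1)) (hrCoeff n α β) (fun k => -1 - α - k) t := by
  have hw : 0 < -t := by linarith
  have hpow : ∀ k : ℕ, (-t) ^ (-1 - α) * (1 / t) ^ k = (-1) ^ k * (-t) ^ (-1 - α - k) := by
    intro k
    rw [sub_eq_add_neg (-1 - α), Real.rpow_add hw, Real.rpow_neg hw.le, Real.rpow_natCast,
      one_div, ← inv_pow, show t⁻¹ = -1 * (-t)⁻¹ by rw [inv_neg]; ring, mul_pow]
    ring
  simp only [HR, negRpowSum, hrCoeff, mul_sum]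
  refine sum_congr rfl fun k _ => ?_
  linear_combination poch β n / poch (α + 1) n * (poch (-(n : ℝ)) k * poch (α + 1) k)
    / (k.factorial * poch (1 - β - n) k) * hpow k

lemma hrCoeff_recurrence (n : ℕ) (α β : ℝ) (hd : ∀ j < n, 1 - β - (n : ℝ) + (j : ℝ) ≠ 0)
    (k : ℕ) :
    hrCoeff n α β (k + 1) * (k + 1) * (n + β - (k + 1))
      = -(hrCoeff n α β k * (1 + α + k) * (n - k)) := by
  rcases lt_trichotomy k n with hk | rfl | hk
  · have hD : poch (1 - β - n) k ≠ 0 := poch_ne_zero fun j hj => hd j (hj.trans hk)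
    have hDk : 1 - β - (n : ℝ) + k ≠ 0 := hd k hk
    simp only [hrCoeff, poch_succ, Nat.factorial_succ, Nat.cast_mul, Nat.cast_add, Nat.cast_one,
      pow_succ]
    field_simp
    ring
  · simp [hrCoeff, poch_neg_natCast_of_lt (Nat.lt_succ_self k)]
  · simp [hrCoeff, poch_neg_natCast_of_lt hk,
      poch_neg_natCast_of_lt (hk.trans (Nat.lt_succ_self k))]

theorem hr_quasi_eigenfunction_type3_general (n : ℕ) (α β : ℝ)
    (hd : ∀ j < n, 1 - β - (n : ℝ) + (j : ℝ) ≠ 0) :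
    ∀ z : ℝ, z < 0 →
      z * (1 - z) * deriv (deriv (fun t => (-t) ^ (-1 - α) * HR n α β (1 / t))) z
        + (1 - β - (2 + α) * z) * deriv (fun t => (-t) ^ (-1 - α) * HR n α β (1 / t)) z
      = (-(n : ℝ) - 1 - α - β) *
          ((1 - z) * deriv (fun t => (-t) ^ (-1 - α) * HR n α β (1 / t)) z
            - (α + 1) * ((-z) ^ (-1 - α) * HR n α β (1 / z))) := fun _ hz =>
  quasiEigen_of_eqOn_negRpowSum n α β _ (hrCoeff_recurrence n α β hd)
    (fun _ ht => rpow_mul_HR_one_div_eq_negRpowSum n α β ht) hz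

theorem hr_quasi_eigenfunction_type3 (n : ℕ) (α β : ℝ)
    (hβ : ∀ j < n, β + (j : ℝ) ≠ 0)
    (hα : ∀ j < n, α + 1 + (j : ℝ) ≠ 0)
    (hd : ∀ j < n, 1 - β - (n : ℝ) + (j : ℝ) ≠ 0) :
    ∀ z : ℝ, z < 0 →
      z * (1 - z) * deriv (deriv (fun t => (-t) ^ (-1 - α) * HR n α β (1 / t))) z
        + (1 - β - (2 + α) * z) * deriv (fun t => (-t) ^ (-1 - α) * HR n α β (1 / t)) z
      = (-(n : ℝ) - 1 - α - β) *
          ((1 - z) * deriv (fun t => (-t) ^ (-1 - α) * HR n α β (1 / t)) z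
            - (α + 1) * ((-z) ^ (-1 - α) * HR n α β (1 / z))) :=
  hr_quasi_eigenfunction_type3_general n α β hd
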